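/- Let (R, μ) be a σ-finite nonatomic measure space, p ∈ (0, ∞), and v : R → [0, ∞) a μ-measurable function. Then for every μ-measurable function f, ( ∫_0^∞ f^*(t)^p v_*(t) dt )^{1/p} ≤ ( ∫_R |f(x)|^p v(x) dμ(x) )^{1/p}, where f^* is the nonincreasing rearrangement of f and v_* the nondecreasing rearrangement of v, both with respect to μ. -/

import Mathlib

/-!
Writing both sides with the two-variable layer-cake formula
`∫ F G = ∫_{s>0} ∫_{r>0} |{F > s} ∩ {G > r}|`, it suffices to compare level sets.
If `f^*(t) > s` and `v_*(t) > r`, then `μ {v ≤ r} < t < μ {|f| > s}`, so such `t` fill at most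
an interval of length `μ {|f| > s} - μ {v ≤ r} ≤ μ ({|f| > s} ∩ {v > r})`.
-/

open MeasureTheory Set Filter Topology ENNReal

variable {α : Type*} [MeasurableSpace α]

/-- A measure is *nonatomic* if every set of positive measure contains a measurable subset
of strictly smaller, positive measure. -/
def Nonatomic (μ : Measure α) : Prop :=
  ∀ E : Set α, MeasurableSet E → 0 < μ E → ∃ F, F ⊆ E ∧ MeasurableSet F ∧ 0 < μ F ∧ μ F < μ E

/-- The lower distribution function `κ_f(s) = μ {x : |f x| < s}`. -/
noncomputable def lowerDistrib (μ : Measure α) (f : α → ℝ) (s : ℝ) : ℝ≥0∞ :=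
  μ {x | |f x| < s}

/-- The nondecreasing rearrangement `f_*(t) = sup {s > 0 : κ_f(s) < t}` (with `sup ∅ = 0`). -/
noncomputable def ndRearr (μ : Measure α) (f : α → ℝ) (t : ℝ) : ℝ≥0∞ :=
  sSup {y : ℝ≥0∞ | ∃ s : ℝ, 0 < s ∧ lowerDistrib μ f s < ENNReal.ofReal t ∧ y = ENNReal.ofReal s}

/-- The distribution function `μ_f(s) = μ {x : |f x| > s}`. -/
noncomputable def distrib (μ : Measure α) (f : α → ℝ) (s : ℝ) : ℝ≥0∞ :=
  μ {x | s < |f x|}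

/-- The nonincreasing rearrangement `f^*(t) = inf {s > 0 : μ_f(s) ≤ t}` (with `inf ∅ = ∞`). -/
noncomputable def niRearr (μ : Measure α) (f : α → ℝ) (t : ℝ) : ℝ≥0∞ :=
  sInf {y : ℝ≥0∞ | ∃ s : ℝ, 0 < s ∧ distrib μ f s ≤ ENNReal.ofReal t ∧ y = ENNReal.ofReal s}

theorem ENNReal.ofReal_lt_rpow_iff {p s : ℝ} (hp : 0 < p) (hs : 0 ≤ s) {x : ℝ≥0∞} :
    ENNReal.ofReal s < x ^ p ↔ ENNReal.ofReal (s ^ p⁻¹) < x := by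
  have hs' : ENNReal.ofReal s = ENNReal.ofReal (s ^ p⁻¹) ^ p := by
    rw [ENNReal.ofReal_rpow_of_nonneg (Real.rpow_nonneg hs _) hp.le, ← Real.rpow_mul hs,
      inv_mul_cancel₀ hp.ne', Real.rpow_one]
  rw [hs', ENNReal.rpow_lt_rpow_iff hp]

theorem volume_ofReal_preimage_Ioo_le (K D : ℝ≥0∞) :
    volume (ENNReal.ofReal ⁻¹' Ioo K D) ≤ D - K := by
  rcases eq_or_ne K ∞ with rfl | hK
  · simp
  rcases eq_or_ne D ∞ with rfl | hD
  · simp [top_sub hK]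
  have hsub : ENNReal.ofReal ⁻¹' Ioo K D ⊆ Ioo K.toReal D.toReal := by
    rintro t ⟨hKt, htD⟩
    have hKt' : K.toReal < t := (ENNReal.lt_ofReal_iff_toReal_lt hK).mp hKt
    exact ⟨hKt', (ENNReal.ofReal_lt_iff_lt_toReal (toReal_nonneg.trans hKt'.le) hD).mp htD⟩
  calc volume (ENNReal.ofReal ⁻¹' Ioo K D) ≤ volume (Ioo K.toReal D.toReal) := measure_mono hsub
    _ = D - K := by
      rw [Real.volume_Ioo, ENNReal.ofReal_sub _ toReal_nonneg, ofReal_toReal hD, ofReal_toReal hK]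

theorem volume_restrict_Ioi_setOf_ofReal_lt (c : ℝ≥0∞) :
    volume.restrict (Ioi (0 : ℝ)) {s | ENNReal.ofReal s < c} = c := by
  rw [Measure.restrict_apply' measurableSet_Ioi]
  rcases eq_or_ne c ∞ with rfl | hc
  · simp
  have h : {s : ℝ | ENNReal.ofReal s < c} ∩ Ioi 0 = Ioo 0 c.toReal := by
    ext t
    simp only [mem_inter_iff, mem_ofPred_eq, mem_Ioi, mem_Ioo]
    exact ⟨fun h => ⟨h.2, (ENNReal.ofReal_lt_iff_lt_toReal h.2.le hc).mp h.1⟩,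
      fun h => ⟨(ENNReal.ofReal_lt_iff_lt_toReal h.1.le hc).mpr h.2, h.1⟩⟩
  rw [h, Real.volume_Ioo, sub_zero, ofReal_toReal hc]

section LayerCake

variable {β γ : Type*} [MeasurableSpace β] [MeasurableSpace γ]

theorem lintegral_eq_lintegral_meas_ofReal_lt (ν : Measure β) [SFinite ν] {H : β → ℝ≥0∞}
    (hH : Measurable H) :
    ∫⁻ x, H x ∂ν = ∫⁻ s in Ioi 0, ν {x | ENNReal.ofReal s < H x} := by
  have hS : MeasurableSet {q : β × ℝ | ENNReal.ofReal q.2 < H q.1} :=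
    measurableSet_lt (by fun_prop) (by fun_prop)
  calc ∫⁻ x, H x ∂ν = ∫⁻ x, volume.restrict (Ioi 0) {s | ENNReal.ofReal s < H x} ∂ν := by
        simp_rw [volume_restrict_Ioi_setOf_ofReal_lt]
    _ = (ν.prod (volume.restrict (Ioi 0))) {q | ENNReal.ofReal q.2 < H q.1} :=
        (Measure.prod_apply hS).symm
    _ = ∫⁻ s in Ioi 0, ν {x | ENNReal.ofReal s < H x} := Measure.prod_apply_symm hS

theorem lintegral_mul_eq_lintegral_lintegral_meas_inter (ν : Measure β) [SFinite ν]
    {H₁ H₂ : β → ℝ≥0∞} (h₁ : Measurable H₁) (h₂ : Measurable H₂) :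
    ∫⁻ x, H₁ x * H₂ x ∂ν = ∫⁻ s in Ioi 0, ∫⁻ r in Ioi 0,
      ν ({x | ENNReal.ofReal s < H₁ x} ∩ {x | ENNReal.ofReal r < H₂ x}) := by
  have hdens : ∫⁻ x, H₁ x * H₂ x ∂ν = ∫⁻ x, H₁ x ∂ν.withDensity H₂ := by
    rw [lintegral_withDensity_eq_lintegral_mul ν h₂ h₁]
    simp_rw [Pi.mul_apply, mul_comm]
  rw [hdens, lintegral_eq_lintegral_meas_ofReal_lt _ h₁]
  refine lintegral_congr fun s => ?_
  rw [withDensity_apply _ (measurableSet_lt measurable_const h₁),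
    lintegral_eq_lintegral_meas_ofReal_lt _ h₂]
  refine lintegral_congr fun r => ?_
  rw [Measure.restrict_apply (measurableSet_lt measurable_const h₂), inter_comm]

theorem lintegral_mul_le_of_measure_inter_le {ν₁ : Measure β} {ν₂ : Measure γ} [SFinite ν₁]
    [SFinite ν₂] {H₁ H₂ : β → ℝ≥0∞} {G₁ G₂ : γ → ℝ≥0∞} (hH₁ : Measurable H₁)
    (hH₂ : Measurable H₂) (hG₁ : Measurable G₁) (hG₂ : Measurable G₂)
    (h : ∀ s > 0, ∀ r > 0,
      ν₁ ({x | ENNReal.ofReal s < H₁ x} ∩ {x | ENNReal.ofReal r < H₂ x}) ≤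
        ν₂ ({y | ENNReal.ofReal s < G₁ y} ∩ {y | ENNReal.ofReal r < G₂ y})) :
    ∫⁻ x, H₁ x * H₂ x ∂ν₁ ≤ ∫⁻ y, G₁ y * G₂ y ∂ν₂ := by
  rw [lintegral_mul_eq_lintegral_lintegral_meas_inter ν₁ hH₁ hH₂,
    lintegral_mul_eq_lintegral_lintegral_meas_inter ν₂ hG₁ hG₂]
  exact setLIntegral_mono' measurableSet_Ioi fun s hs =>
    setLIntegral_mono' measurableSet_Ioi fun r hr => h s hs r hr

end LayerCake

section Rearrangement

variable (μ : Measure α) (f g : α → ℝ)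

theorem niRearr_antitone : Antitone (niRearr μ f) := fun _ _ h =>
  sInf_le_sInf fun _ ⟨s, hs, hd, hy⟩ => ⟨s, hs, hd.trans (ENNReal.ofReal_le_ofReal h), hy⟩

theorem ndRearr_monotone : Monotone (ndRearr μ g) := fun _ _ h =>
  sSup_le_sSup fun _ ⟨s, hs, hκ, hy⟩ => ⟨s, hs, hκ.trans_le (ENNReal.ofReal_le_ofReal h), hy⟩

variable {μ f g}

theorem ofReal_lt_distrib_of_ofReal_lt_niRearr {s t : ℝ} (hs : 0 < s)
    (h : ENNReal.ofReal s < niRearr μ f t) : ENNReal.ofReal t < distrib μ f s := by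
  contrapose! h
  exact sInf_le ⟨s, hs, h, rfl⟩

theorem measure_abs_le_lt_of_ofReal_lt_ndRearr {r t : ℝ}
    (h : ENNReal.ofReal r < ndRearr μ g t) : μ {x | |g x| ≤ r} < ENNReal.ofReal t := by
  obtain ⟨_, ⟨s, -, hκ, rfl⟩, hrs⟩ := lt_sSup_iff.mp h
  have hrs : r < s := (ENNReal.ofReal_lt_ofReal_iff'.mp hrs).1
  exact (measure_mono fun x (hx : |g x| ≤ r) => hx.trans_lt hrs).trans_lt hκ

theorem volume_lt_niRearr_inter_lt_ndRearr_le {s : ℝ} (hs : 0 < s) (r : ℝ) :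
    volume ({t | ENNReal.ofReal s < niRearr μ f t} ∩ {t | ENNReal.ofReal r < ndRearr μ g t}) ≤
      μ ({x | s < |f x|} ∩ {x | r < |g x|}) :=
  calc _ ≤ volume (ENNReal.ofReal ⁻¹' Ioo (μ {x | |g x| ≤ r}) (distrib μ f s)) :=
        measure_mono fun _ h => ⟨measure_abs_le_lt_of_ofReal_lt_ndRearr h.2,
          ofReal_lt_distrib_of_ofReal_lt_niRearr hs h.1⟩
    _ ≤ distrib μ f s - μ {x | |g x| ≤ r} := volume_ofReal_preimage_Ioo_le _ _
    _ ≤ μ ({x | s < |f x|} \ {x | |g x| ≤ r}) := le_measure_sdiff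
    _ = μ ({x | s < |f x|} ∩ {x | r < |g x|}) := by
        simp only [sdiff_eq, compl_ofPred, not_le]

end Rearrangement

theorem lorentz_norm_le_weighted_Lp_norm_general
    (μ : Measure α) [SigmaFinite μ]
    (p : ℝ) (hp : 0 < p) (v : α → ℝ) (hv : Measurable v) (hv0 : 0 ≤ v)
    (f : α → ℝ) (hf : Measurable f) :
    (∫⁻ t in Ioi (0 : ℝ), niRearr μ f t ^ p * ndRearr μ v t) ^ (1 / p) ≤
      (∫⁻ x, ENNReal.ofReal (|f x| ^ p * v x) ∂μ) ^ (1 / p) := by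
  refine ENNReal.rpow_le_rpow ?_ (by positivity)
  have hRHS : ∀ x, ENNReal.ofReal (|f x| ^ p * v x) =
      ENNReal.ofReal |f x| ^ p * ENNReal.ofReal (v x) := fun x => by
    rw [ENNReal.ofReal_mul (by positivity), ENNReal.ofReal_rpow_of_nonneg (abs_nonneg _) hp.le]
  simp_rw [hRHS]
  refine lintegral_mul_le_of_measure_inter_le ((niRearr_antitone μ f).measurable.pow_const p)
    (ndRearr_monotone μ v).measurable (by fun_prop) (by fun_prop) fun s hs r hr => ?_
  have hs' : 0 < s ^ p⁻¹ := Real.rpow_pos_of_pos hs _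
  simp_rw [ENNReal.ofReal_lt_rpow_iff hp hs.le, ENNReal.ofReal_lt_ofReal_iff_of_nonneg hs'.le,
    ENNReal.ofReal_lt_ofReal_iff_of_nonneg hr.le]
  calc _ ≤ volume ({t | ENNReal.ofReal (s ^ p⁻¹) < niRearr μ f t} ∩
          {t | ENNReal.ofReal r < ndRearr μ v t}) := Measure.restrict_le_self _
    _ ≤ μ ({x | s ^ p⁻¹ < |f x|} ∩ {x | r < |v x|}) := volume_lt_niRearr_inter_lt_ndRearr_le hs' r
    _ = μ ({x | s ^ p⁻¹ < |f x|} ∩ {x | r < v x}) := by simp_rw [abs_of_nonneg (hv0 _)]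

/-- `‖f‖_{Λ^p(R, v_*)} ≤ ‖f‖_{L^p(R, v)}` for every μ-measurable `f`. -/
theorem lorentz_norm_le_weighted_Lp_norm
    (μ : Measure α) [SigmaFinite μ] (hμ : Nonatomic μ)
    (p : ℝ) (hp : 0 < p) (v : α → ℝ) (hv : Measurable v) (hv0 : 0 ≤ v)
    (f : α → ℝ) (hf : Measurable f) :
    (∫⁻ t in Ioi (0 : ℝ), niRearr μ f t ^ p * ndRearr μ v t) ^ (1 / p) ≤
      (∫⁻ x, ENNReal.ofReal (|f x| ^ p * v x) ∂μ) ^ (1 / p) :=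
  lorentz_norm_le_weighted_Lp_norm_general μ p hp v hv hv0 f hf
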